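/- arXiv:2501.06931 — 7 statements merged into one kernel-verified Lean document; each statement's English description precedes it below -/
import Mathlib

section
/- Suppose ū ∈ V(σ̄) and there exists a vector v ∈ N_{V(σ̄)}(ū) that is not a scalar multiple of ξ. Then ‖ū‖ = σ̄; in particular ⟪ξ, ū⟫ ≥ γ‖ū‖, and for any constants ρ_min, ρ_max with ρ_min ≤ σ̄ ≤ ρ_max one has ρ_min ≤ ‖ū‖ ≤ ρ_max. -/
open RealInnerProductSpace

/-- If `u ∈ V(σ)` (spherical cap) and the normal cone to `V(σ)` at `u`
contains a vector that is not a scalar multiple of `ξ`, then `‖u‖ = σ`; in particular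
`⟪ξ, u⟫ ≥ γ‖u‖` and `ρmin ≤ ‖u‖ ≤ ρmax` whenever `ρmin ≤ σ ≤ ρmax`. -/
theorem stmt_0 (n : ℕ) (hn : 1 ≤ n)
    (ξ : EuclideanSpace ℝ (Fin n)) (hξ : ‖ξ‖ = 1)
    (γ σ : ℝ) (hγ0 : 0 < γ) (hγ1 : γ < 1) (hσ : 0 < σ)
    (V : Set (EuclideanSpace ℝ (Fin n)))
    (hV : V = {w : EuclideanSpace ℝ (Fin n) | ‖w‖ ≤ σ ∧ γ * σ ≤ ⟪ξ, w⟫})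
    (u : EuclideanSpace ℝ (Fin n)) (hu : u ∈ V)
    (v : EuclideanSpace ℝ (Fin n))
    (hvN : ∀ y ∈ V, ⟪v, y - u⟫ ≤ 0)
    (hvξ : ∀ c : ℝ, v ≠ c • ξ) :
    ‖u‖ = σ ∧ γ * ‖u‖ ≤ ⟪ξ, u⟫ ∧
      ∀ ρmin ρmax : ℝ, ρmin ≤ σ → σ ≤ ρmax → ρmin ≤ ‖u‖ ∧ ‖u‖ ≤ ρmax := by
  subst hV
  obtain ⟨hu1, hu2⟩ := hu
  have hns : ‖u‖ = σ := by
    rcases eq_or_lt_of_le hu1 with h | h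
    · exact h
    exfalso
    set c : ℝ := ⟪v, ξ⟫ with hc
    set w : EuclideanSpace ℝ (Fin n) := v - c • ξ with hw
    have hξξ : ⟪ξ, ξ⟫ = (1 : ℝ) := by
      rw [real_inner_self_eq_norm_sq, hξ]; norm_num
    have hwξ : ⟪ξ, w⟫ = 0 := by
      rw [hw, inner_sub_right, real_inner_smul_right, hξξ, real_inner_comm]
      ring
    have hw0 : w ≠ 0 := by
      intro h0
      exact hvξ c (sub_eq_zero.mp h0)
    have hwn : 0 < ‖w‖ := norm_pos_iff.mpr hw0
    set t : ℝ := (σ - ‖u‖) / ‖w‖ with ht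
    have htpos : 0 < t := div_pos (by linarith) hwn
    have htw : t * ‖w‖ = σ - ‖u‖ := div_mul_cancel₀ _ (ne_of_gt hwn)
    have hy : u + t • w ∈ {w : EuclideanSpace ℝ (Fin n) | ‖w‖ ≤ σ ∧ γ * σ ≤ ⟪ξ, w⟫} := by
      constructor
      · calc ‖u + t • w‖ ≤ ‖u‖ + ‖t • w‖ := norm_add_le _ _
          _ = ‖u‖ + t * ‖w‖ := by
              rw [norm_smul, Real.norm_eq_abs, abs_of_pos htpos]
          _ = σ := by rw [htw]; ring
      · rw [inner_add_right, real_inner_smul_right, hwξ]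
        simpa using hu2
    have hle := hvN _ hy
    rw [add_sub_cancel_left, real_inner_smul_right] at hle
    have hvw : ⟪v, w⟫ = ‖w‖ ^ 2 := by
      have hv : v = w + c • ξ := by rw [hw]; abel
      have hwξ' : ⟪w, ξ⟫ = (0 : ℝ) := by rw [real_inner_comm]; exact hwξ
      rw [hv, inner_add_left, real_inner_smul_left, hwξ, real_inner_self_eq_norm_sq]
      ring
    rw [hvw] at hle
    nlinarith [sq_nonneg ‖w‖]
  refine ⟨hns, ?_, ?_⟩
  · rw [hns]; exact le_trans (by nlinarith) hu2
  · intro ρmin ρmax h1 h2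
    exact ⟨by rw [hns]; exact h1, by rw [hns]; exact h2⟩
end

section
/- Suppose ū ∈ W(σ̄) and there exists a vector v ∈ N_{W(σ̄)}(ū) such that v is not a scalar multiple of ξ₁ and not a scalar multiple of ξ₂. Then ū = 0 or ‖ū‖ = σ̄. -/
open RealInnerProductSpace Module

lemma perp_collinear (x y z : EuclideanSpace ℝ (Fin 2)) (hx : x ≠ 0) (hy : y ≠ 0)
    (hxy : ⟪x, y⟫ = 0) (hxz : ⟪x, z⟫ = 0) : ∃ t : ℝ, z = t • y := by
  set K : Submodule ℝ (EuclideanSpace ℝ (Fin 2)) := (ℝ ∙ x)ᗮ with hK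
  have hyK : y ∈ K := Submodule.mem_orthogonal_singleton_iff_inner_right.2 hxy
  have hzK : z ∈ K := Submodule.mem_orthogonal_singleton_iff_inner_right.2 hxz
  have hdim : finrank ℝ K ≤ 1 := by
    have h1 := Submodule.finrank_add_finrank_orthogonal (K := (ℝ ∙ x : Submodule ℝ (EuclideanSpace ℝ (Fin 2))))
    rw [finrank_span_singleton hx] at h1
    have h2 : finrank ℝ (EuclideanSpace ℝ (Fin 2)) = 2 := by simp
    rw [h2, ← hK] at h1
    omega
  obtain ⟨v₀, hv₀⟩ := (finrank_le_one_iff (K := ℝ) (V := K)).1 hdim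
  obtain ⟨c₁, hc₁⟩ := hv₀ ⟨y, hyK⟩
  obtain ⟨c₂, hc₂⟩ := hv₀ ⟨z, hzK⟩
  have hc₁0 : c₁ ≠ 0 := by
    rintro rfl
    simp only [zero_smul] at hc₁
    exact hy (by simpa using congrArg Subtype.val hc₁.symm)
  refine ⟨c₂ / c₁, ?_⟩
  have h1 : c₁ • (v₀ : EuclideanSpace ℝ (Fin 2)) = y := congrArg Subtype.val hc₁
  have h2 : c₂ • (v₀ : EuclideanSpace ℝ (Fin 2)) = z := congrArg Subtype.val hc₂
  rw [← h1, ← h2, smul_smul, div_mul_cancel₀ _ hc₁0]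

/-- If `u ∈ W(σ)` (the sector) and the normal cone to `W(σ)` at `u` contains a
vector that is neither a scalar multiple of `ξ₁` nor of `ξ₂`, then `u = 0` or `‖u‖ = σ`. -/
theorem stmt_2
    (ξ : EuclideanSpace ℝ (Fin 2)) (hξ : ‖ξ‖ = 1)
    (γ σ : ℝ) (hγ0 : 0 < γ) (hγ1 : γ < 1) (hσ : 0 < σ)
    (W : Set (EuclideanSpace ℝ (Fin 2)))
    (hW : W = {w : EuclideanSpace ℝ (Fin 2) | ‖w‖ ≤ σ ∧ γ * ‖w‖ ≤ ⟪ξ, w⟫})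
    (a b : EuclideanSpace ℝ (Fin 2)) (hab : a ≠ b)
    (ha : ‖a‖ = 1) (hb : ‖b‖ = 1) (haξ : ⟪ξ, a⟫ = γ) (hbξ : ⟪ξ, b⟫ = γ)
    (ξ₁ ξ₂ : EuclideanSpace ℝ (Fin 2)) (hξ₁ : ‖ξ₁‖ = 1) (hξ₂ : ‖ξ₂‖ = 1)
    (hξ₁a : ⟪ξ₁, a⟫ = 0) (hξ₁ξ : ⟪ξ₁, ξ⟫ < 0)
    (hξ₂b : ⟪ξ₂, b⟫ = 0) (hξ₂ξ : ⟪ξ₂, ξ⟫ < 0)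
    (u : EuclideanSpace ℝ (Fin 2)) (hu : u ∈ W)
    (v : EuclideanSpace ℝ (Fin 2))
    (hvN : ∀ y ∈ W, ⟪v, y - u⟫ ≤ 0)
    (hvξ₁ : ∀ c : ℝ, v ≠ c • ξ₁) (hvξ₂ : ∀ c : ℝ, v ≠ c • ξ₂) :
    u = 0 ∨ ‖u‖ = σ := by
  by_contra hcon
  push_neg at hcon
  obtain ⟨hu0, huσ⟩ := hcon
  subst hW
  obtain ⟨huσ', huγ⟩ := hu
  have hun : 0 < ‖u‖ := norm_pos_iff.2 hu0
  have hultσ : ‖u‖ < σ := lt_of_le_of_ne huσ' huσ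
  have hv0 : v ≠ 0 := fun h => hvξ₁ 0 (by simp [h])
  have hnv : 0 < ‖v‖ := norm_pos_iff.2 hv0
  rcases eq_or_lt_of_le huγ with heq | hlt
  · -- edge case: γ‖u‖ = ⟪ξ,u⟫
    -- first: ⟪v, u⟫ = 0
    have h0W : (0 : EuclideanSpace ℝ (Fin 2)) ∈ {w : EuclideanSpace ℝ (Fin 2) | ‖w‖ ≤ σ ∧ γ * ‖w‖ ≤ ⟪ξ, w⟫} := by
      simp [le_of_lt hσ]
    have h1 := hvN 0 h0W
    rw [zero_sub, inner_neg_right] at h1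
    have hvu0 : 0 ≤ ⟪v, u⟫ := by linarith
    have hσuW : (σ / ‖u‖) • u ∈ {w : EuclideanSpace ℝ (Fin 2) | ‖w‖ ≤ σ ∧ γ * ‖w‖ ≤ ⟪ξ, w⟫} := by
      constructor
      · rw [norm_smul, Real.norm_eq_abs, abs_of_pos (div_pos hσ hun)]
        rw [div_mul_cancel₀ _ (ne_of_gt hun)]
      · rw [norm_smul, Real.norm_eq_abs, abs_of_pos (div_pos hσ hun), inner_smul_right]
        rw [div_mul_cancel₀ _ (ne_of_gt hun), ← heq]
        have h5 : σ / ‖u‖ * (γ * ‖u‖) = γ * σ := by field_simp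
        linarith [h5]
    have h2 := hvN _ hσuW
    have h2' : (σ / ‖u‖ - 1) * ⟪v, u⟫ ≤ 0 := by
      have : (σ / ‖u‖) • u - u = (σ / ‖u‖ - 1) • u := by rw [sub_smul, one_smul]
      rwa [this, inner_smul_right] at h2
    have hcoef : 0 < σ / ‖u‖ - 1 := by
      rw [sub_pos, lt_div_iff₀ hun, one_mul]; exact hultσ
    have hvu_le : ⟪v, u⟫ ≤ 0 := by nlinarith
    have hvu : ⟪v, u⟫ = 0 := le_antisymm hvu_le hvu0
    -- classification: u/‖u‖ = a or b
    set uhat : EuclideanSpace ℝ (Fin 2) := (‖u‖)⁻¹ • u with huhatdef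
    have huhatn : ‖uhat‖ = 1 := by
      rw [huhatdef, norm_smul, Real.norm_eq_abs, abs_of_pos (inv_pos.2 hun), inv_mul_cancel₀ (ne_of_gt hun)]
    have huhatξ : ⟪ξ, uhat⟫ = γ := by
      rw [huhatdef, inner_smul_right, ← heq]
      field_simp
    have hξ0 : ξ ≠ 0 := by intro h; rw [h] at hξ; simp at hξ
    have ha0 : a ≠ 0 := by intro h; rw [h] at ha; simp at ha
    have hb0 : b ≠ 0 := by intro h; rw [h] at hb; simp at hb
    have hξ₁0 : ξ₁ ≠ 0 := by intro h; rw [h] at hξ₁; simp at hξ₁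
    have hξ₂0 : ξ₂ ≠ 0 := by intro h; rw [h] at hξ₂; simp at hξ₂
    have hab0 : a - b ≠ 0 := sub_ne_zero.2 hab
    have hξab : ⟪ξ, a - b⟫ = 0 := by rw [inner_sub_right, haξ, hbξ, sub_self]
    have hξuhata : ⟪ξ, uhat - a⟫ = 0 := by rw [inner_sub_right, huhatξ, haξ, sub_self]
    obtain ⟨t, ht⟩ := perp_collinear ξ (a - b) (uhat - a) hξ0 hab0 hξab hξuhata
    have huhateq : uhat = a + t • (a - b) := by rw [← ht]; abel
    set p : ℝ := ⟪a, b⟫ with hp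
    have hp1 : p < 1 := by
      have h3 : 0 < ‖a - b‖ ^ 2 := pow_pos (norm_pos_iff.2 hab0) 2
      have h4 : ‖a - b‖ ^ 2 = 2 - 2 * p := by
        rw [norm_sub_sq_real, ha, hb, hp]; ring
      linarith
    have hnorm1 : ⟪uhat, uhat⟫ = 1 := by
      rw [real_inner_self_eq_norm_sq, huhatn]; norm_num
    have e1 : ⟪a, a⟫ = 1 := by rw [real_inner_self_eq_norm_sq, ha]; norm_num
    have e2 : ⟪b, b⟫ = 1 := by rw [real_inner_self_eq_norm_sq, hb]; norm_num
    have e3 : ⟪b, a⟫ = p := by rw [real_inner_comm, hp]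
    have hexp : ⟪uhat, uhat⟫ = 1 + 2 * t * (1 - p) + t ^ 2 * (2 - 2 * p) := by
      rw [huhateq]
      simp only [inner_add_left, inner_add_right, inner_sub_left, inner_sub_right,
        real_inner_smul_left, real_inner_smul_right, e1, e2, e3, ← hp]
      ring
    have hteq : t * (1 + t) * (1 - p) = 0 := by
      rw [hnorm1] at hexp; linear_combination (-1/2 : ℝ) * hexp
    have ht01 : t = 0 ∨ t = -1 := by
      rcases mul_eq_zero.1 hteq with h | h
      · rcases mul_eq_zero.1 h with h' | h'
        · exact Or.inl h'
        · exact Or.inr (by linarith)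
      · linarith
    have hva_or : uhat = a ∨ uhat = b := by
      rcases ht01 with h | h
      · left; rw [huhateq, h]; simp
      · right; rw [huhateq, h, neg_one_smul]; abel
    have hvuhat : ⟪uhat, v⟫ = 0 := by
      rw [huhatdef, inner_smul_left, RCLike.conj_to_real, real_inner_comm, hvu, mul_zero]
    rcases hva_or with h | h
    · -- uhat = a, so v ⊥ a, v ∈ span ξ₁
      have hav : ⟪a, v⟫ = 0 := by rw [← h]; exact hvuhat
      have haξ₁ : ⟪a, ξ₁⟫ = 0 := by rw [real_inner_comm]; exact hξ₁a
      obtain ⟨c, hc⟩ := perp_collinear a ξ₁ v ha0 hξ₁0 haξ₁ hav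
      exact hvξ₁ c hc
    · have hbv : ⟪b, v⟫ = 0 := by rw [← h]; exact hvuhat
      have hbξ₂ : ⟪b, ξ₂⟫ = 0 := by rw [real_inner_comm]; exact hξ₂b
      obtain ⟨c, hc⟩ := perp_collinear b ξ₂ v hb0 hξ₂0 hbξ₂ hbv
      exact hvξ₂ c hc
  · -- interior case: γ‖u‖ < ⟪ξ,u⟫
    set t : ℝ := min ((σ - ‖u‖) / ‖v‖) ((⟪ξ, u⟫ - γ * ‖u‖) / ((1 + γ) * ‖v‖)) with htdef
    have hgp : 0 < (1 + γ) * ‖v‖ := by positivity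
    have ht1 : 0 < (σ - ‖u‖) / ‖v‖ := div_pos (by linarith) hnv
    have ht2 : 0 < (⟪ξ, u⟫ - γ * ‖u‖) / ((1 + γ) * ‖v‖) := div_pos (by linarith) hgp
    have ht : 0 < t := lt_min ht1 ht2
    have htv1 : t * ‖v‖ ≤ σ - ‖u‖ := by
      rw [← le_div_iff₀ hnv]; exact min_le_left _ _
    have htv2 : (1 + γ) * (t * ‖v‖) ≤ ⟪ξ, u⟫ - γ * ‖u‖ := by
      have := min_le_right ((σ - ‖u‖) / ‖v‖) ((⟪ξ, u⟫ - γ * ‖u‖) / ((1 + γ) * ‖v‖))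
      rw [le_div_iff₀ hgp] at this
      calc (1 + γ) * (t * ‖v‖) = t * ((1 + γ) * ‖v‖) := by ring
        _ ≤ _ := this
    have hinner_bd : -‖v‖ ≤ ⟪ξ, v⟫ := by
      have := abs_real_inner_le_norm ξ v
      rw [hξ, one_mul] at this
      linarith [neg_abs_le (⟪ξ, v⟫ : ℝ)]
    have hyW : u + t • v ∈ {w : EuclideanSpace ℝ (Fin 2) | ‖w‖ ≤ σ ∧ γ * ‖w‖ ≤ ⟪ξ, w⟫} := by
      have hntv : ‖t • v‖ = t * ‖v‖ := by
        rw [norm_smul, Real.norm_eq_abs, abs_of_pos ht]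
      constructor
      · calc ‖u + t • v‖ ≤ ‖u‖ + ‖t • v‖ := norm_add_le _ _
          _ = ‖u‖ + t * ‖v‖ := by rw [hntv]
          _ ≤ σ := by linarith
      · have h1 : ‖u + t • v‖ ≤ ‖u‖ + t * ‖v‖ := by
          calc ‖u + t • v‖ ≤ ‖u‖ + ‖t • v‖ := norm_add_le _ _
            _ = _ := by rw [hntv]
        have h2 : ⟪ξ, u + t • v⟫ = ⟪ξ, u⟫ + t * ⟪ξ, v⟫ := by
          rw [inner_add_right, inner_smul_right]
        have h3 : ⟪ξ, u⟫ - t * ‖v‖ ≤ ⟪ξ, u + t • v⟫ := by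
          rw [h2]
          have : -(t * ‖v‖) ≤ t * ⟪ξ, v⟫ := by nlinarith
          linarith
        nlinarith
    have h4 := hvN _ hyW
    rw [add_sub_cancel_left, inner_smul_right, real_inner_self_eq_norm_sq] at h4
    have h5 : 0 < t * ‖v‖ ^ 2 := mul_pos ht (pow_pos hnv 2)
    linarith
end

section
/- For every t with 0 < t < σ̄, the normal cone to the sector W(σ̄) at the edge point ū = t·a is exactly the ray generated by ξ₁: N_{W(σ̄)}(t·a) = {λξ₁ : λ ≥ 0}. -/
open RealInnerProductSpace

/-- Any vector in a 2-dimensional real inner product space decomposes along two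
orthonormal vectors. -/
lemma decomp_aux (a b : EuclideanSpace ℝ (Fin 2)) (ha : ‖a‖ = 1) (hb : ‖b‖ = 1)
    (hab : ⟪a, b⟫ = 0) (v : EuclideanSpace ℝ (Fin 2)) :
    ∃ x y : ℝ, v = x • a + y • b := by
  have hba : ⟪b, a⟫ = 0 := by rw [real_inner_comm]; exact hab
  have haa : ⟪a, a⟫ = 1 := by rw [real_inner_self_eq_norm_sq, ha]; norm_num
  have hbb : ⟪b, b⟫ = 1 := by rw [real_inner_self_eq_norm_sq, hb]; norm_num
  have hon : Orthonormal ℝ ![a, b] := by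
    rw [orthonormal_iff_ite]
    intro i j
    fin_cases i <;> fin_cases j <;>
      simp only [Matrix.cons_val_zero, Matrix.cons_val_one, Matrix.head_cons] <;>
      first
        | simpa using haa
        | simpa using hbb
        | simpa using hab
        | simpa using hba
  have hli := hon.linearIndependent
  have hsp : Submodule.span ℝ (Set.range ![a, b]) = ⊤ := by
    apply Submodule.eq_top_of_finrank_eq
    rw [finrank_span_eq_card hli]
    simp [finrank_euclideanSpace]
  have hv : v ∈ Submodule.span ℝ (Set.range ![a, b]) := hsp ▸ Submodule.mem_top
  rw [Submodule.mem_span_range_iff_exists_fun] at hv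
  obtain ⟨c, hc⟩ := hv
  refine ⟨c 0, c 1, ?_⟩
  rw [← hc, Fin.sum_univ_two]
  simp only [Matrix.cons_val_zero, Matrix.cons_val_one, Matrix.head_cons]

/-- For `0 < t < σ`, the normal cone to the sector `W(σ)` at the edge point
`t • a` is exactly the ray generated by `ξ₁`. -/
theorem stmt_4
    (ξ : EuclideanSpace ℝ (Fin 2)) (hξ : ‖ξ‖ = 1)
    (γ σ : ℝ) (hγ0 : 0 < γ) (hγ1 : γ < 1) (hσ : 0 < σ)
    (W : Set (EuclideanSpace ℝ (Fin 2)))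
    (hW : W = {w : EuclideanSpace ℝ (Fin 2) | ‖w‖ ≤ σ ∧ γ * ‖w‖ ≤ ⟪ξ, w⟫})
    (a : EuclideanSpace ℝ (Fin 2)) (ha : ‖a‖ = 1) (haξ : ⟪ξ, a⟫ = γ)
    (ξ₁ : EuclideanSpace ℝ (Fin 2)) (hξ₁ : ‖ξ₁‖ = 1)
    (hξ₁a : ⟪ξ₁, a⟫ = 0) (hξ₁ξ : ⟪ξ₁, ξ⟫ < 0)
    (t : ℝ) (ht0 : 0 < t) (htσ : t < σ) :
    {v : EuclideanSpace ℝ (Fin 2) | ∀ y ∈ W, ⟪v, y - t • a⟫ ≤ 0} =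
      {v : EuclideanSpace ℝ (Fin 2) | ∃ c : ℝ, 0 ≤ c ∧ v = c • ξ₁} := by
  have haξ₁ : ⟪a, ξ₁⟫ = 0 := by rw [real_inner_comm]; exact hξ₁a
  obtain ⟨p, q, hξdec⟩ := decomp_aux a ξ₁ ha hξ₁ haξ₁ ξ
  have haa : ⟪a, a⟫ = 1 := by rw [real_inner_self_eq_norm_sq, ha]; norm_num
  have hbb : ⟪ξ₁, ξ₁⟫ = 1 := by rw [real_inner_self_eq_norm_sq, hξ₁]; norm_num
  have hp : p = γ := by
    have h := haξ
    rw [real_inner_comm, hξdec, inner_add_right, real_inner_smul_right,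
      real_inner_smul_right, haa, haξ₁] at h
    linarith
  have hq : q < 0 := by
    have h := hξ₁ξ
    rw [real_inner_comm, hξdec, inner_add_left, real_inner_smul_left,
      real_inner_smul_left, haξ₁, hbb] at h
    linarith
  -- key: ξ₁ pairs nonpositively with every element of W
  have key : ∀ y ∈ W, ⟪ξ₁, y⟫ ≤ 0 := by
    intro y hy
    rw [hW] at hy
    obtain ⟨hy1, hy2⟩ := hy
    have hay : ⟪a, y⟫ ≤ ‖y‖ := by
      have := real_inner_le_norm a y
      rwa [ha, one_mul] at this
    have hiy : ⟪ξ, y⟫ = γ * ⟪a, y⟫ + q * ⟪ξ₁, y⟫ := by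
      rw [hξdec, hp, inner_add_left, real_inner_smul_left, real_inner_smul_left]
    nlinarith [mul_le_mul_of_nonneg_left hay hγ0.le]
  ext v
  simp only [Set.mem_setOf_eq]
  constructor
  · intro hv
    obtain ⟨x, y, hvdec⟩ := decomp_aux a ξ₁ ha hξ₁ haξ₁ v
    have hva : ⟪v, a⟫ = x := by
      rw [hvdec, inner_add_left, real_inner_smul_left, real_inner_smul_left,
        haa, hξ₁a]
      ring
    have hvξ₁ : ⟪v, ξ₁⟫ = y := by
      rw [hvdec, inner_add_left, real_inner_smul_left, real_inner_smul_left,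
        haξ₁, hbb]
      ring
    have hmem : ∀ s : ℝ, 0 ≤ s → s ≤ σ → s • a ∈ W := by
      intro s hs0 hsσ
      rw [hW]
      constructor
      · rw [norm_smul, ha]; simpa [abs_of_nonneg hs0] using hsσ
      · rw [norm_smul, ha, real_inner_smul_right, haξ]
        rw [Real.norm_eq_abs, abs_of_nonneg hs0]
        ring_nf
        exact le_refl _
    have h1 := hv (((t + σ) / 2) • a) (hmem _ (by linarith) (by linarith))
    have h2 := hv ((t / 2) • a) (hmem _ (by linarith) (by linarith))
    have hξmem : t • ξ ∈ W := by
      rw [hW]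
      refine ⟨?_, ?_⟩
      · rw [norm_smul, hξ, Real.norm_eq_abs, abs_of_nonneg ht0.le]; linarith
      · rw [norm_smul, hξ, real_inner_smul_right, real_inner_self_eq_norm_sq, hξ,
          Real.norm_eq_abs, abs_of_nonneg ht0.le]
        nlinarith
    have h3 := hv (t • ξ) hξmem
    rw [inner_sub_right, real_inner_smul_right, real_inner_smul_right, hva] at h1 h2
    have hx : x = 0 := by nlinarith
    have hvξ : ⟪v, ξ⟫ = y * q := by
      rw [hvdec, hξdec, hp, inner_add_left, inner_add_right, inner_add_right,
        real_inner_smul_left, real_inner_smul_left, real_inner_smul_left,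
        real_inner_smul_left, real_inner_smul_right, real_inner_smul_right,
        real_inner_smul_right, real_inner_smul_right, haa, hbb, haξ₁, hξ₁a, hx]
      ring
    rw [inner_sub_right, real_inner_smul_right, real_inner_smul_right, hva, hx,
      hvξ] at h3
    have hy0 : 0 ≤ y := by
      by_contra hcon
      push_neg at hcon
      nlinarith [mul_pos ht0 (mul_pos_of_neg_of_neg hcon hq)]
    refine ⟨y, hy0, ?_⟩
    rw [hvdec, hx, zero_smul, zero_add]
  · rintro ⟨c, hc, rfl⟩
    intro y hy
    rw [inner_sub_right, real_inner_smul_left, real_inner_smul_left,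
      real_inner_smul_right, hξ₁a]
    have := key y hy
    nlinarith
end

section
/- Let B be a real n_x × n matrix and η ∈ ℝ^{n_x}. Suppose ū ∈ V(σ̄), the vector −Bᵀη belongs to the normal cone N_{V(σ̄)}(ū), and Bᵀη is not a scalar multiple of ξ. Then ‖ū‖ = σ̄; in particular ⟪ξ, ū⟫ ≥ γ‖ū‖ and, for any ρ_min, ρ_max with ρ_min ≤ σ̄ ≤ ρ_max, one has ρ_min ≤ ‖ū‖ ≤ ρ_max. -/
open RealInnerProductSpace Matrix

/-- Identification of a plain vector in `Fin n → ℝ` with a point of Euclidean space. -/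
noncomputable def toE {n : ℕ} (v : Fin n → ℝ) : EuclideanSpace ℝ (Fin n) :=
  (EuclideanSpace.equiv (Fin n) ℝ).symm v

/-- If `u ∈ V(σ)` (spherical cap), `−Bᵀη` lies in the normal cone
`N_{V(σ)}(u)`, and `Bᵀη` is not a scalar multiple of `ξ`, then `‖u‖ = σ`; in particular
`⟪ξ, u⟫ ≥ γ‖u‖` and `ρmin ≤ ‖u‖ ≤ ρmax` whenever `ρmin ≤ σ ≤ ρmax`. -/
theorem stmt_5 (n : ℕ) (hn : 1 ≤ n) (nx : ℕ)
    (ξ : EuclideanSpace ℝ (Fin n)) (hξ : ‖ξ‖ = 1)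
    (γ σ : ℝ) (hγ0 : 0 < γ) (hγ1 : γ < 1) (hσ : 0 < σ)
    (V : Set (EuclideanSpace ℝ (Fin n)))
    (hV : V = {w : EuclideanSpace ℝ (Fin n) | ‖w‖ ≤ σ ∧ γ * σ ≤ ⟪ξ, w⟫})
    (B : Matrix (Fin nx) (Fin n) ℝ) (η : Fin nx → ℝ)
    (u : EuclideanSpace ℝ (Fin n)) (hu : u ∈ V)
    (hN : ∀ y ∈ V, ⟪-toE (Bᵀ *ᵥ η), y - u⟫ ≤ 0)
    (hBη : ∀ c : ℝ, toE (Bᵀ *ᵥ η) ≠ c • ξ) :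
    ‖u‖ = σ ∧ γ * ‖u‖ ≤ ⟪ξ, u⟫ ∧
      ∀ ρmin ρmax : ℝ, ρmin ≤ σ → σ ≤ ρmax → ρmin ≤ ‖u‖ ∧ ‖u‖ ≤ ρmax := by
  have hu' : ‖u‖ ≤ σ ∧ γ * σ ≤ ⟪ξ, u⟫ := by rw [hV] at hu; exact hu
  obtain ⟨hu1, hu2⟩ := hu'
  set g : EuclideanSpace ℝ (Fin n) := -toE (Bᵀ *ᵥ η) with hg
  have key : ‖u‖ = σ := by
    by_contra hne
    have hlt : ‖u‖ < σ := lt_of_le_of_ne hu1 hne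
    have horth : ∀ v : EuclideanSpace ℝ (Fin n), ⟪ξ, v⟫ = 0 → ⟪g, v⟫ = 0 := by
      intro v hv
      set t : ℝ := (σ - ‖u‖) / (‖v‖ + 1) with ht
      have ht0 : 0 < t := div_pos (by linarith) (by positivity)
      have hmem : ∀ s : ℝ, |s| ≤ t → u + s • v ∈ V := by
        intro s hs
        rw [hV]
        constructor
        · have h1 : ‖u + s • v‖ ≤ ‖u‖ + |s| * ‖v‖ := by
            calc ‖u + s • v‖ ≤ ‖u‖ + ‖s • v‖ := norm_add_le _ _
              _ = ‖u‖ + |s| * ‖v‖ := by rw [norm_smul, Real.norm_eq_abs]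
          have h2 : |s| * ‖v‖ ≤ t * (‖v‖ + 1) := by
            have h3 := abs_nonneg s
            nlinarith [norm_nonneg v]
          have h4 : t * (‖v‖ + 1) = σ - ‖u‖ := by
            rw [ht]; field_simp
          linarith
        · show γ * σ ≤ ⟪ξ, u + s • v⟫
          rw [inner_add_right, real_inner_smul_right, hv]
          simpa using hu2
      have h1 := hN _ (hmem t (by rw [abs_of_pos ht0]))
      have h2 := hN _ (hmem (-t) (by rw [abs_neg, abs_of_pos ht0]))
      rw [add_sub_cancel_left, real_inner_smul_right] at h1 h2
      nlinarith
    set c : ℝ := ⟪ξ, g⟫ with hc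
    have hgv : g = c • ξ := by
      have hξξ : ⟪ξ, ξ⟫ = 1 := by
        rw [real_inner_self_eq_norm_mul_norm, hξ]; ring
      have h0 : ⟪ξ, g - c • ξ⟫ = 0 := by
        rw [inner_sub_right, real_inner_smul_right, hξξ]; ring
      have h1 := horth _ h0
      have h2 : ⟪g - c • ξ, g - c • ξ⟫ = 0 := by
        rw [inner_sub_left, real_inner_smul_left, h1, h0]; ring
      exact sub_eq_zero.mp (inner_self_eq_zero.mp h2)
    exact hBη (-c) (by rw [neg_smul, ← hgv, hg, neg_neg])
  refine ⟨key, by rw [key]; exact hu2, fun ρmin ρmax h1 h2 => ⟨by linarith [key], by linarith [key]⟩⟩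
end

section
/- Let B be a real n_x × 2 matrix and η ∈ ℝ^{n_x}. Suppose ū ∈ W(σ̄), the vector −Bᵀη belongs to the normal cone N_{W(σ̄)}(ū), and Bᵀη is neither a scalar multiple of ξ₁ nor a scalar multiple of ξ₂. Then ū = 0 or ‖ū‖ = σ̄. -/
open RealInnerProductSpace Matrix

lemma dep_of_orth (a v w : EuclideanSpace ℝ (Fin 2)) (ha : a ≠ 0) (hw : w ≠ 0)
    (hv : ⟪a, v⟫ = 0) (hwo : ⟪a, w⟫ = 0) : ∃ c : ℝ, v = c • w := by
  set K := (ℝ ∙ a)ᗮ with hK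
  have hdim : Module.finrank ℝ K = 1 := by
    have h1 := Submodule.finrank_add_finrank_orthogonal (K := (ℝ ∙ a : Submodule ℝ (EuclideanSpace ℝ (Fin 2))))
    rw [finrank_span_singleton ha] at h1
    rw [finrank_euclideanSpace_fin] at h1
    rw [hK]; omega
  have hwK : w ∈ K := Submodule.mem_orthogonal_singleton_iff_inner_right.2 hwo
  have hvK : v ∈ K := Submodule.mem_orthogonal_singleton_iff_inner_right.2 hv
  have hwne : (⟨w, hwK⟩ : K) ≠ 0 := by simpa [Subtype.ext_iff] using hw
  obtain ⟨c, hc⟩ := (finrank_eq_one_iff_of_nonzero' (⟨w, hwK⟩ : K) hwne).1 hdim ⟨v, hvK⟩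
  exact ⟨c, by simpa [Subtype.ext_iff, eq_comm] using hc⟩

lemma circle_two (ξ a b x : EuclideanSpace ℝ (Fin 2)) {γ : ℝ} (hξ : ‖ξ‖ = 1)
    (hγ0 : 0 < γ) (hγ1 : γ < 1) (hab : a ≠ b)
    (ha : ‖a‖ = 1) (hb : ‖b‖ = 1) (haξ : ⟪ξ, a⟫ = γ) (hbξ : ⟪ξ, b⟫ = γ)
    (hx : ‖x‖ = 1) (hxξ : ⟪ξ, x⟫ = γ) : x = a ∨ x = b := by
  have hξξ : ⟪ξ, ξ⟫ = (1 : ℝ) := by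
    rw [real_inner_self_eq_norm_sq, hξ]; norm_num
  have hnorm : ∀ y : EuclideanSpace ℝ (Fin 2), ‖y‖ = 1 → ⟪ξ, y⟫ = γ →
      ‖y - γ • ξ‖ ^ 2 = 1 - γ ^ 2 := by
    intro y hy hyξ
    have h3 : ⟪y, ξ⟫ = γ := by rw [real_inner_comm]; exact hyξ
    rw [norm_sub_sq_real, real_inner_smul_right, h3, norm_smul, hy, hξ,
      Real.norm_eq_abs, abs_of_pos hγ0]
    ring
  have horth : ∀ y : EuclideanSpace ℝ (Fin 2), ⟪ξ, y⟫ = γ → ⟪ξ, y - γ • ξ⟫ = 0 := by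
    intro y hyξ
    rw [inner_sub_right, real_inner_smul_right, hξξ, hyξ]; ring
  have hpos : (0:ℝ) < 1 - γ ^ 2 := by nlinarith
  have hane : a - γ • ξ ≠ 0 := by
    intro h
    have := hnorm a ha haξ
    rw [h] at this; simp at this; nlinarith
  have hξne : ξ ≠ 0 := by intro h; rw [h] at hξ; simp at hξ
  obtain ⟨c, hc⟩ := dep_of_orth ξ (x - γ • ξ) (a - γ • ξ) hξne hane
    (horth x hxξ) (horth a haξ)
  obtain ⟨c', hc'⟩ := dep_of_orth ξ (b - γ • ξ) (a - γ • ξ) hξne hane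
    (horth b hbξ) (horth a haξ)
  have hc2 : c ^ 2 = 1 := by
    have h1 := hnorm x hx hxξ
    have h2 := hnorm a ha haξ
    rw [hc, norm_smul, Real.norm_eq_abs] at h1
    nlinarith [sq_abs c, h1, h2, hpos]
  have hc'2 : c' ^ 2 = 1 := by
    have h1 := hnorm b hb hbξ
    have h2 := hnorm a ha haξ
    rw [hc', norm_smul, Real.norm_eq_abs] at h1
    nlinarith [sq_abs c', h1, h2, hpos]
  have hcc : c = 1 ∨ c = -1 := by
    have h0 : (c - 1) * (c + 1) = 0 := by nlinarith
    rcases mul_eq_zero.1 h0 with h | h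
    · left; linarith
    · right; linarith
  have hcc' : c' = 1 ∨ c' = -1 := by
    have h0 : (c' - 1) * (c' + 1) = 0 := by nlinarith
    rcases mul_eq_zero.1 h0 with h | h
    · left; linarith
    · right; linarith
  rcases hcc with h1 | h1
  · left
    rw [h1, one_smul] at hc
    exact sub_left_inj.mp hc
  · right
    have hc'neg : c' = -1 := by
      rcases hcc' with h2 | h2
      · exfalso; rw [h2, one_smul] at hc'
        exact hab (sub_left_inj.mp hc').symm
      · exact h2
    rw [h1] at hc; rw [hc'neg] at hc'
    rw [← hc'] at hc
    exact sub_left_inj.mp hc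


/-- If `u ∈ W(σ)` (the sector), `−Bᵀη` lies in the normal cone `N_{W(σ)}(u)`,
and `Bᵀη` is neither a scalar multiple of `ξ₁` nor of `ξ₂`, then `u = 0` or `‖u‖ = σ`. -/
theorem stmt_6 (nx : ℕ)
    (ξ : EuclideanSpace ℝ (Fin 2)) (hξ : ‖ξ‖ = 1)
    (γ σ : ℝ) (hγ0 : 0 < γ) (hγ1 : γ < 1) (hσ : 0 < σ)
    (W : Set (EuclideanSpace ℝ (Fin 2)))
    (hW : W = {w : EuclideanSpace ℝ (Fin 2) | ‖w‖ ≤ σ ∧ γ * ‖w‖ ≤ ⟪ξ, w⟫})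
    (a b : EuclideanSpace ℝ (Fin 2)) (hab : a ≠ b)
    (ha : ‖a‖ = 1) (hb : ‖b‖ = 1) (haξ : ⟪ξ, a⟫ = γ) (hbξ : ⟪ξ, b⟫ = γ)
    (ξ₁ ξ₂ : EuclideanSpace ℝ (Fin 2)) (hξ₁ : ‖ξ₁‖ = 1) (hξ₂ : ‖ξ₂‖ = 1)
    (hξ₁a : ⟪ξ₁, a⟫ = 0) (hξ₁ξ : ⟪ξ₁, ξ⟫ < 0)
    (hξ₂b : ⟪ξ₂, b⟫ = 0) (hξ₂ξ : ⟪ξ₂, ξ⟫ < 0)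
    (B : Matrix (Fin nx) (Fin 2) ℝ) (η : Fin nx → ℝ)
    (u : EuclideanSpace ℝ (Fin 2)) (hu : u ∈ W)
    (hN : ∀ y ∈ W, ⟪-toE (Bᵀ *ᵥ η), y - u⟫ ≤ 0)
    (hBη₁ : ∀ c : ℝ, toE (Bᵀ *ᵥ η) ≠ c • ξ₁)
    (hBη₂ : ∀ c : ℝ, toE (Bᵀ *ᵥ η) ≠ c • ξ₂) :
    u = 0 ∨ ‖u‖ = σ := by
  set v := toE (Bᵀ *ᵥ η) with hv
  have hN' : ∀ y ∈ W, 0 ≤ ⟪v, y - u⟫ := by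
    intro y hy
    have h := hN y hy
    rw [inner_neg_left] at h
    linarith
  by_contra hcon
  push_neg at hcon
  obtain ⟨hu0, huσ⟩ := hcon
  rw [hW] at hu
  obtain ⟨hu1, hu2⟩ := hu
  have hlt : ‖u‖ < σ := lt_of_le_of_ne hu1 huσ
  have hr : 0 < ‖u‖ := norm_pos_iff.mpr hu0
  have hedge_mem : ∀ (s : ℝ) (e : EuclideanSpace ℝ (Fin 2)), 0 ≤ s → s ≤ σ →
      ‖e‖ = 1 → ⟪ξ, e⟫ = γ → s • e ∈ W := by
    intro s e hs0 hsσ he heξ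
    rw [hW]
    constructor
    · rw [norm_smul, he, Real.norm_eq_abs, abs_of_nonneg hs0]; simpa using hsσ
    · rw [norm_smul, he, Real.norm_eq_abs, abs_of_nonneg hs0, real_inner_smul_right, heξ]
      ring_nf
      exact le_refl _
  rcases eq_or_lt_of_le hu2 with heq | hlt2
  · -- boundary of the cone constraint: u lies on an edge
    set r := ‖u‖ with hrdef
    set x := r⁻¹ • u with hx
    have hrne : r ≠ 0 := ne_of_gt hr
    have hxnorm : ‖x‖ = 1 := by
      rw [hx, norm_smul, Real.norm_eq_abs, abs_of_pos (inv_pos.mpr hr)]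
      exact inv_mul_cancel₀ hrne
    have hxξ : ⟪ξ, x⟫ = γ := by
      rw [hx, real_inner_smul_right, ← heq]
      field_simp
    have hue : ∀ e : EuclideanSpace ℝ (Fin 2), x = e → u = r • e := by
      intro e hex
      rw [← hex, hx, smul_smul, mul_inv_cancel₀ hrne, one_smul]
    have edge : ∀ (e w₀ : EuclideanSpace ℝ (Fin 2)), ‖e‖ = 1 → ⟪ξ, e⟫ = γ →
        u = r • e → ‖w₀‖ = 1 → ⟪w₀, e⟫ = 0 → ∃ c : ℝ, v = c • w₀ := by
      intro e w₀ he heξ hur hw₀ hw₀e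
      set ε := min (σ - r) r with hε
      have hεa : ε ≤ σ - r := by rw [hε]; exact min_le_left _ _
      have hεb : ε ≤ r := by rw [hε]; exact min_le_right _ _
      have hε0 : 0 < ε := lt_min (by linarith) hr
      have hyp : (r + ε) • e ∈ W :=
        hedge_mem _ _ (by linarith) (by linarith) he heξ
      have hym : (r - ε) • e ∈ W :=
        hedge_mem _ _ (by linarith) (by linarith) he heξ
      have hp := hN' _ hyp
      have hm := hN' _ hym
      rw [hur, ← sub_smul] at hp hm
      have ep : r + ε - r = ε := by ring
      have em : r - ε - r = -ε := by ring
      rw [ep, real_inner_smul_right] at hp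
      rw [em, real_inner_smul_right] at hm
      have hve : ⟪v, e⟫ = 0 := by nlinarith
      have hene : e ≠ 0 := by intro h; rw [h] at he; simp at he
      have hwne : w₀ ≠ 0 := by intro h; rw [h] at hw₀; simp at hw₀
      exact dep_of_orth e v w₀ hene hwne (by rw [real_inner_comm]; exact hve)
        (by rw [real_inner_comm]; exact hw₀e)
    rcases circle_two ξ a b x hξ hγ0 hγ1 hab ha hb haξ hbξ hxnorm hxξ with hxa | hxb
    · obtain ⟨c, hc⟩ := edge a ξ₁ ha haξ (hue a hxa) hξ₁ hξ₁a
      exact hBη₁ c hc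
    · obtain ⟨c, hc⟩ := edge b ξ₂ hb hbξ (hue b hxb) hξ₂ hξ₂b
      exact hBη₂ c hc
  · -- interior: the normal cone is trivial
    by_cases hv0 : v = 0
    · exact hBη₁ 0 (by rw [hv0]; simp)
    have hnv : 0 < ‖v‖ := norm_pos_iff.mpr hv0
    set δ := ⟪ξ, u⟫ - γ * ‖u‖ with hδ
    have hδ0 : 0 < δ := by rw [hδ]; linarith
    set t := min ((σ - ‖u‖) / ‖v‖) (δ / ((1 + γ) * ‖v‖)) with ht
    have ht0 : 0 < t := lt_min (div_pos (by linarith) hnv) (div_pos hδ0 (by positivity))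
    have ht1 : t * ‖v‖ ≤ σ - ‖u‖ := by
      have := min_le_left ((σ - ‖u‖) / ‖v‖) (δ / ((1 + γ) * ‖v‖))
      rw [← ht] at this
      calc t * ‖v‖ ≤ (σ - ‖u‖) / ‖v‖ * ‖v‖ := by
            exact mul_le_mul_of_nonneg_right this hnv.le
        _ = σ - ‖u‖ := by field_simp
    have ht2 : t * ((1 + γ) * ‖v‖) ≤ δ := by
      have := min_le_right ((σ - ‖u‖) / ‖v‖) (δ / ((1 + γ) * ‖v‖))
      rw [← ht] at this
      have hpos : (0:ℝ) < (1 + γ) * ‖v‖ := by positivity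
      calc t * ((1 + γ) * ‖v‖) ≤ δ / ((1 + γ) * ‖v‖) * ((1 + γ) * ‖v‖) :=
            mul_le_mul_of_nonneg_right this hpos.le
        _ = δ := by field_simp
    have hyW : u - t • v ∈ W := by
      rw [hW]
      have hnorm_y : ‖u - t • v‖ ≤ ‖u‖ + t * ‖v‖ := by
        calc ‖u - t • v‖ ≤ ‖u‖ + ‖t • v‖ := norm_sub_le _ _
          _ = ‖u‖ + t * ‖v‖ := by
              rw [norm_smul, Real.norm_eq_abs, abs_of_pos ht0]
      have hiv : ⟪ξ, v⟫ ≤ ‖v‖ := by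
        have := real_inner_le_norm ξ v
        rwa [hξ, one_mul] at this
      constructor
      · linarith
      · have hinner : ⟪ξ, u - t • v⟫ = ⟪ξ, u⟫ - t * ⟪ξ, v⟫ := by
          rw [inner_sub_right, real_inner_smul_right]
        rw [hinner]
        have h1 : γ * ‖u - t • v‖ ≤ γ * (‖u‖ + t * ‖v‖) :=
          mul_le_mul_of_nonneg_left hnorm_y hγ0.le
        rw [hδ] at ht2
        have h2 : t * ⟪ξ, v⟫ ≤ t * ‖v‖ := mul_le_mul_of_nonneg_left hiv ht0.le
        have h3 : t * ((1 + γ) * ‖v‖) = t * ‖v‖ + γ * (t * ‖v‖) := by ring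
        have h4 : γ * (‖u‖ + t * ‖v‖) = γ * ‖u‖ + γ * (t * ‖v‖) := by ring
        linarith
    have hfin := hN' _ hyW
    have : u - t • v - u = -(t • v) := by abel
    rw [this, inner_neg_right, real_inner_smul_right, real_inner_self_eq_norm_sq] at hfin
    have : 0 < t * ‖v‖ ^ 2 := by positivity
    linarith
end

section
/- Let N ≥ n_x be positive integers, A ∈ ℝ^{n_x×n_x}, B ∈ ℝ^{n_x×n_u}, let ξ ∈ ℝ^{n_u} be a unit vector, and let M ∈ ℝ^{n_u×(n_u−1)} be a matrix whose columns form a basis of the hyperplane {v ∈ ℝ^{n_u} : ⟪ξ, v⟫ = 0}. Suppose that for every choice of n_x distinct indices P₁, …, P_{n_x} ∈ {1, …, N}, the block matrix [A^{N−P₁}BM, …, A^{N−P_{n_x}}BM] has rank n_x. Then for every nonzero η ∈ ℝ^{n_x}, the number of indices i ∈ {1, …, N} for which Bᵀ(Aᵀ)^{N−i}η is a scalar multiple of ξ is at most n_x − 1. -/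
/-!
If `n_x` indices `P₁, …, P_{n_x}` had `Bᵀ(Aᵀ)^{N−Pⱼ}η ∈ ℝξ`, then, since `ξ` is orthogonal to the
columns of `M`, `ηᵀA^{N−Pⱼ}BM = 0` for every `j`. So `η ≠ 0` would lie in the left kernel of the
block matrix `[A^{N−P₁}BM, …, A^{N−P_{n_x}}BM]`, whose `n_x` rows are independent by the rank
hypothesis.
-/

open RealInnerProductSpace Matrix

open scoped Classical

theorem Matrix.eq_zero_of_vecMul_eq_zero_of_rank_eq_card {R m n : Type*} [Field R] [Fintype m] [Fintype n]
    {K : Matrix m n R} (hK : K.rank = Fintype.card m) {η : m → R} (hη : η ᵥ* K = 0) :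
    η = 0 := by
  have hrows : LinearIndependent R K.row := by
    rw [linearIndependent_iff_card_eq_finrank_span, Set.finrank, ← rank_eq_finrank_span_row, hK]
  exact Matrix.vecMul_injective_iff.2 hrows (hη.trans (zero_vecMul K).symm)

theorem inner_toE {n : ℕ} (x : EuclideanSpace ℝ (Fin n)) (v : Fin n → ℝ) :
    ⟪x, toE v⟫ = x.ofLp ⬝ᵥ v := by
  simp [toE, EuclideanSpace.inner_eq_star_dotProduct, dotProduct_comm]

theorem vecMul_eq_zero_of_inner_col_eq_zero {n : ℕ} {ι : Type*} [Fintype ι]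
    {ξ : EuclideanSpace ℝ (Fin n)} {M : Matrix (Fin n) ι ℝ} (hM : ∀ j, ⟪ξ, toE (Mᵀ j)⟫ = 0) :
    ξ.ofLp ᵥ* M = 0 := by
  funext j
  simpa [inner_toE, vecMul, dotProduct] using hM j

theorem vecMul_pow_mul_mul_eq_zero {m ι : Type*} [Fintype m] [DecidableEq m] [Fintype ι] {n : ℕ}
    {ξ : EuclideanSpace ℝ (Fin n)} {M : Matrix (Fin n) ι ℝ} (hM : ξ.ofLp ᵥ* M = 0)
    {A : Matrix m m ℝ} {B : Matrix m (Fin n) ℝ} {η : m → ℝ} {k : ℕ} {c : ℝ}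
    (h : toE ((Bᵀ * Aᵀ ^ k) *ᵥ η) = c • ξ) :
    η ᵥ* (A ^ k * B * M) = 0 := by
  have hη : η ᵥ* (A ^ k * B) = c • ξ.ofLp := by
    rw [← mulVec_transpose, transpose_mul, transpose_pow]
    exact congrArg WithLp.ofLp h
  rw [← vecMul_vecMul, hη, smul_vecMul, hM, smul_zero]

theorem stmt_10_general (nx nu N : ℕ)
    (A : Matrix (Fin nx) (Fin nx) ℝ) (B : Matrix (Fin nx) (Fin nu) ℝ)
    (ξ : EuclideanSpace ℝ (Fin nu))
    (M : Matrix (Fin nu) (Fin (nu - 1)) ℝ)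
    (hspan : (Submodule.span ℝ (Set.range fun j : Fin (nu - 1) => toE (Mᵀ j)) : Set _) =
      {v : EuclideanSpace ℝ (Fin nu) | ⟪ξ, v⟫ = 0})
    (hrank : ∀ P : Fin nx → ℕ, (∀ j, P j ∈ Finset.Icc 1 N) → Function.Injective P →
      (Matrix.of fun r (p : Fin nx × Fin (nu - 1)) =>
        (A ^ (N - P p.1) * B * M) r p.2).rank = nx) :
    ∀ η : Fin nx → ℝ, η ≠ 0 →
      ((Finset.Icc 1 N).filter fun i =>
        ∃ c : ℝ, toE ((Bᵀ * (Aᵀ) ^ (N - i)) *ᵥ η) = c • ξ).card ≤ nx - 1 := by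
  intro η hη
  set S := (Finset.Icc 1 N).filter fun i => ∃ c : ℝ, toE ((Bᵀ * (Aᵀ) ^ (N - i)) *ᵥ η) = c • ξ
  by_contra! hS
  obtain ⟨T, hTS, hT⟩ := Finset.exists_subset_card_eq (show nx ≤ S.card by omega)
  set P := T.orderEmbOfFin hT
  have hPS (j : Fin nx) : P j ∈ S := hTS (T.orderEmbOfFin_mem hT j)
  have hMξ : ξ.ofLp ᵥ* M = 0 := vecMul_eq_zero_of_inner_col_eq_zero fun j =>
    (Set.ext_iff.1 hspan _).1 (Submodule.subset_span ⟨j, rfl⟩)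
  have hK := hrank P (fun j => (Finset.mem_filter.1 (hPS j)).1) P.injective
  refine hη (eq_zero_of_vecMul_eq_zero_of_rank_eq_card (hK.trans (Fintype.card_fin nx).symm) ?_)
  funext ⟨j, col⟩
  obtain ⟨c, hc⟩ := (Finset.mem_filter.1 (hPS j)).2
  exact congrFun (vecMul_pow_mul_mul_eq_zero hMξ hc) col

/-- If the columns of `M` form a basis of the hyperplane orthogonal to the
unit vector `ξ`, and for every choice of `n_x` distinct indices `P₁, …, P_{n_x} ∈ {1, …, N}`
the block matrix `[A^{N−P₁}BM, …, A^{N−P_{n_x}}BM]` has rank `n_x`, then for every nonzero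
`η` the number of indices `i ∈ {1, …, N}` for which `Bᵀ(Aᵀ)^{N−i}η` is a scalar multiple
of `ξ` is at most `n_x − 1`. -/
theorem stmt_10 (nx nu N : ℕ) (hnx : 0 < nx) (hN : nx ≤ N)
    (A : Matrix (Fin nx) (Fin nx) ℝ) (B : Matrix (Fin nx) (Fin nu) ℝ)
    (ξ : EuclideanSpace ℝ (Fin nu)) (hξ : ‖ξ‖ = 1)
    (M : Matrix (Fin nu) (Fin (nu - 1)) ℝ)
    (hindep : LinearIndependent ℝ (fun j : Fin (nu - 1) => toE (Mᵀ j)))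
    (hspan : (Submodule.span ℝ (Set.range fun j : Fin (nu - 1) => toE (Mᵀ j)) : Set _) =
      {v : EuclideanSpace ℝ (Fin nu) | ⟪ξ, v⟫ = 0})
    (hrank : ∀ P : Fin nx → ℕ, (∀ j, P j ∈ Finset.Icc 1 N) → Function.Injective P →
      (Matrix.of fun r (p : Fin nx × Fin (nu - 1)) =>
        (A ^ (N - P p.1) * B * M) r p.2).rank = nx) :
    ∀ η : Fin nx → ℝ, η ≠ 0 →
      ((Finset.Icc 1 N).filter fun i =>
        ∃ c : ℝ, toE ((Bᵀ * (Aᵀ) ^ (N - i)) *ᵥ η) = c • ξ).card ≤ nx - 1 :=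
  stmt_10_general nx nu N A B ξ M hspan hrank
end

section
/- Let N ≥ n_x be positive integers, A ∈ ℝ^{n_x×n_x}, B ∈ ℝ^{n_x×2}, and let w₁, w₂ ∈ ℝ² be nonzero vectors. Suppose that for each k ∈ {1, 2} and for every choice of n_x distinct indices P₁, …, P_{n_x} ∈ {1, …, N}, the matrix [A^{N−P₁}Bw_k, …, A^{N−P_{n_x}}Bw_k] (whose columns are the vectors A^{N−P_j}Bw_k) has rank n_x. Then for every nonzero η ∈ ℝ^{n_x}, the number of indices i ∈ {1, …, N} for which ⟪w₁, Bᵀ(Aᵀ)^{N−i}η⟫ = 0 or ⟪w₂, Bᵀ(Aᵀ)^{N−i}η⟫ = 0 is at most 2n_x − 2. -/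
open RealInnerProductSpace Matrix

open scoped Classical

/-!
The vanishing of `⟪w, Bᵀ(Aᵀ)^{N-i} η⟫` says that `η` is orthogonal to `v i := A^{N-i} B w`.
If `n_x` of these indices vanished for the same `w`, the corresponding `n_x` vectors `v i` would
span the whole space by the rank hypothesis, forcing `η = 0`. So each `w_k` accounts for at most
`n_x - 1` indices, and the two together for at most `2 n_x - 2`.
-/

theorem Matrix.eq_zero_of_vecMul_eq_zero_of_rank_eq {K n : Type*} [Field K] [Fintype n]
    {M : Matrix n n K} (hM : M.rank = Fintype.card n) {η : n → K} (h : η ᵥ* M = 0) :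
    η = 0 := by
  have hsurj : Function.Surjective Mᵀ.mulVecLin := by
    rw [← LinearMap.range_eq_top]
    apply Submodule.eq_top_of_finrank_eq
    rw [← Matrix.rank, rank_transpose, hM, Module.finrank_fintype_fun_eq_card]
  apply LinearMap.injective_iff_surjective.mpr hsurj
  rw [mulVecLin_apply, mulVec_transpose, h, map_zero]

theorem Finset.card_filter_dotProduct_eq_zero_lt {K ι : Type*} [Field K] [LinearOrder ι]
    {n : ℕ} (S : Finset ι) (v : ι → Fin n → K)
    (hv : ∀ P : Fin n → ι, (∀ j, P j ∈ S) → Function.Injective P →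
      (Matrix.of fun r j => v (P j) r).rank = n)
    {η : Fin n → K} (hη : η ≠ 0) :
    (S.filter fun i => v i ⬝ᵥ η = 0).card < n := by
  by_contra! hcard
  set P := (S.filter fun i => v i ⬝ᵥ η = 0).orderEmbOfCardLe hcard
  have hP : ∀ j, P j ∈ S ∧ v (P j) ⬝ᵥ η = 0 := fun j =>
    Finset.mem_filter.mp (Finset.orderEmbOfCardLe_mem _ hcard j)
  have hrank := (hv P (fun j => (hP j).1) P.injective).trans (Fintype.card_fin n).symm
  refine hη (eq_zero_of_vecMul_eq_zero_of_rank_eq hrank (funext fun j => ?_))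
  rw [Pi.zero_apply, ← (hP j).2, dotProduct_comm]
  rfl

theorem inner_toE_transpose_mulVec {m n : ℕ} (M : Matrix (Fin m) (Fin n) ℝ)
    (w : EuclideanSpace ℝ (Fin n)) (η : Fin m → ℝ) :
    ⟪w, toE (Mᵀ *ᵥ η)⟫ = (M *ᵥ fun t => w t) ⬝ᵥ η := by
  rw [mulVec_transpose, dotProduct_comm, dotProduct_mulVec]
  simp only [toE, PiLp.inner_apply, RCLike.inner_apply, conj_trivial, dotProduct]
  rfl

theorem stmt_11_general (nx N : ℕ)
    (A : Matrix (Fin nx) (Fin nx) ℝ) (B : Matrix (Fin nx) (Fin 2) ℝ)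
    (w₁ w₂ : EuclideanSpace ℝ (Fin 2))
    (hrank : ∀ w ∈ ({w₁, w₂} : Set (EuclideanSpace ℝ (Fin 2))),
      ∀ P : Fin nx → ℕ, (∀ j, P j ∈ Finset.Icc 1 N) → Function.Injective P →
        (Matrix.of fun r (j : Fin nx) =>
          ((A ^ (N - P j)) *ᵥ (B *ᵥ fun t => w t)) r).rank = nx) :
    ∀ η : Fin nx → ℝ, η ≠ 0 →
      ((Finset.Icc 1 N).filter fun i =>
        ⟪w₁, toE ((Bᵀ * (Aᵀ) ^ (N - i)) *ᵥ η)⟫ = 0 ∨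
        ⟪w₂, toE ((Bᵀ * (Aᵀ) ^ (N - i)) *ᵥ η)⟫ = 0).card ≤ 2 * nx - 2 := by
  intro η hη
  have hinner (w : EuclideanSpace ℝ (Fin 2)) (i : ℕ) :
      ⟪w, toE ((Bᵀ * (Aᵀ) ^ (N - i)) *ᵥ η)⟫ = (A ^ (N - i) *ᵥ (B *ᵥ fun t => w t)) ⬝ᵥ η := by
    rw [← transpose_pow, ← transpose_mul, inner_toE_transpose_mulVec, mulVec_mulVec]
  have hcount (w : EuclideanSpace ℝ (Fin 2))
      (hw : w ∈ ({w₁, w₂} : Set (EuclideanSpace ℝ (Fin 2)))) :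
      ((Finset.Icc 1 N).filter fun i => ⟪w, toE ((Bᵀ * (Aᵀ) ^ (N - i)) *ᵥ η)⟫ = 0).card < nx := by
    simp only [hinner]
    exact (Finset.Icc 1 N).card_filter_dotProduct_eq_zero_lt
      (fun i => A ^ (N - i) *ᵥ (B *ᵥ fun t => w t)) (hrank w hw) hη
  have h₁ := hcount w₁ (by simp)
  have h₂ := hcount w₂ (by simp)
  rw [Finset.filter_or]
  exact (Finset.card_union_le _ _).trans (by omega)

/-- If for each `k ∈ {1,2}` and every choice of `n_x` distinct indices
`P₁, …, P_{n_x} ∈ {1, …, N}` the matrix whose columns are `A^{N−P_j}Bw_k` has rank `n_x`,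
then for every nonzero `η` the number of indices `i ∈ {1, …, N}` with
`⟪w₁, Bᵀ(Aᵀ)^{N−i}η⟫ = 0` or `⟪w₂, Bᵀ(Aᵀ)^{N−i}η⟫ = 0` is at most `2n_x − 2`. -/
theorem stmt_11 (nx N : ℕ) (hnx : 0 < nx) (hN : nx ≤ N)
    (A : Matrix (Fin nx) (Fin nx) ℝ) (B : Matrix (Fin nx) (Fin 2) ℝ)
    (w₁ w₂ : EuclideanSpace ℝ (Fin 2)) (hw₁ : w₁ ≠ 0) (hw₂ : w₂ ≠ 0)
    (hrank : ∀ w ∈ ({w₁, w₂} : Set (EuclideanSpace ℝ (Fin 2))),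
      ∀ P : Fin nx → ℕ, (∀ j, P j ∈ Finset.Icc 1 N) → Function.Injective P →
        (Matrix.of fun r (j : Fin nx) =>
          ((A ^ (N - P j)) *ᵥ (B *ᵥ fun t => w t)) r).rank = nx) :
    ∀ η : Fin nx → ℝ, η ≠ 0 →
      ((Finset.Icc 1 N).filter fun i =>
        ⟪w₁, toE ((Bᵀ * (Aᵀ) ^ (N - i)) *ᵥ η)⟫ = 0 ∨
        ⟪w₂, toE ((Bᵀ * (Aᵀ) ^ (N - i)) *ᵥ η)⟫ = 0).card ≤ 2 * nx - 2 :=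
  stmt_11_general nx N A B w₁ w₂ hrank
end
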